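/- Let (Z, W, ▷, ◁, ↼, ⇀) be a matched pair of Zinbiel algebras and r: W → Z a deformation map, i.e., r(u·v) − r(u)·r(v) = u⇀r(v) + r(u)↼v − r(u◁r(v) + r(u)▷v) for all u,v ∈ W. Then the subspace W̃ = {(r(u), u) : u ∈ W} is a Zinbiel subalgebra of the bicrossed product Z ⋈ W, and satisfies Z ∩ W̃ = {0} and Z + W̃ = Z ⋈ W; i.e., W̃ is a Z-complement of Z ⋈ W. -/

import Mathlib

/-- The bicrossed product multiplication on `Z ⊕ W`. -/
def bMul {k Z W : Type*} [CommRing k] [AddCommGroup Z] [Module k Z]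
    [AddCommGroup W] [Module k W]
    (m : Z →ₗ[k] Z →ₗ[k] Z) (mW : W →ₗ[k] W →ₗ[k] W)
    (tr : Z →ₗ[k] W →ₗ[k] W) (tl : W →ₗ[k] Z →ₗ[k] W)
    (pl : Z →ₗ[k] W →ₗ[k] Z) (pr : W →ₗ[k] Z →ₗ[k] Z)
    (a b : Z × W) : Z × W :=
  (m a.1 b.1 + pl a.1 b.2 + pr a.2 b.1,
   tr a.1 b.2 + tl a.2 b.1 + mW a.2 b.2)

/-!
Writing `W̃` as the range of `u ↦ (r u, u)`, the deformation identity for `u, v` is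
exactly the `Z`-component of `(r u, u) ∘ (r v, v) = (r w, w)` with
`w = r u ▷ v + u ◁ r v + u · v`, so `W̃` is closed under the product. It is a complement of
`Z × {0} = ker snd` because `(x, w) ↦ (r w, w)` is a projection onto `W̃` with that kernel.
-/

open LinearMap

section Complement

variable {R Z W : Type*} [Ring R] [AddCommGroup Z] [Module R Z] [AddCommGroup W] [Module R W]

theorem ker_rangeRestrict_prod_id_comp_snd (r : W →ₗ[R] Z) :
    ker ((r.prod id).rangeRestrict ∘ₗ snd R Z W) = range (inl R Z W) := by
  rw [ker_comp_of_ker_eq_bot _ (by simp [ker_prod]), ker_snd]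

theorem isCompl_range_inl_range_prod_id (r : W →ₗ[R] Z) :
    IsCompl (range (inl R Z W)) (range (r.prod id)) := by
  have hproj : ∀ x : range (r.prod id), ((r.prod id).rangeRestrict ∘ₗ snd R Z W) x = x := by
    rintro ⟨_, u, rfl⟩
    rfl
  simpa only [ker_rangeRestrict_prod_id_comp_snd] using (isCompl_of_proj hproj).symm

end Complement

section Deformation

variable {k Z W : Type*} [CommRing k] [AddCommGroup Z] [Module k Z]
  [AddCommGroup W] [Module k W]
  (m : Z →ₗ[k] Z →ₗ[k] Z) (mW : W →ₗ[k] W →ₗ[k] W)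
  (tr : Z →ₗ[k] W →ₗ[k] W) (tl : W →ₗ[k] Z →ₗ[k] W)
  (pl : Z →ₗ[k] W →ₗ[k] Z) (pr : W →ₗ[k] Z →ₗ[k] Z)

def IsDeformationMap (r : W →ₗ[k] Z) : Prop :=
  ∀ u v : W, r (mW u v) - m (r u) (r v) = pr u (r v) + pl (r u) v - r (tl u (r v) + tr (r u) v)

variable {m mW tr tl pl pr}

theorem bMul_prod_id_apply {r : W →ₗ[k] Z} {u v : W}
    (h : r (mW u v) - m (r u) (r v) = pr u (r v) + pl (r u) v - r (tl u (r v) + tr (r u) v)) :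
    bMul m mW tr tl pl pr (r.prod id u) (r.prod id v) =
      r.prod id (tr (r u) v + tl u (r v) + mW u v) := by
  refine Prod.ext ?_ rfl
  simp only [bMul, prod_apply, Function.prod, id_coe, id_eq]
  rw [map_add, map_add, eq_add_of_sub_eq h, map_add]
  abel

theorem IsDeformationMap.bMul_mem_range_prod_id {r : W →ₗ[k] Z}
    (hr : IsDeformationMap m mW tr tl pl pr r) {a b : Z × W}
    (ha : a ∈ range (r.prod id)) (hb : b ∈ range (r.prod id)) :
    bMul m mW tr tl pl pr a b ∈ range (r.prod id) := by
  obtain ⟨u, rfl⟩ := ha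
  obtain ⟨v, rfl⟩ := hb
  exact ⟨_, (bMul_prod_id_apply (hr u v)).symm⟩

end Deformation

theorem stmt9_general {k Z W : Type*} [Field k]
    [AddCommGroup Z] [Module k Z] [AddCommGroup W] [Module k W]
    (m : Z →ₗ[k] Z →ₗ[k] Z)
    (mW : W →ₗ[k] W →ₗ[k] W)
    (tr : Z →ₗ[k] W →ₗ[k] W) (tl : W →ₗ[k] Z →ₗ[k] W)
    (pl : Z →ₗ[k] W →ₗ[k] Z) (pr : W →ₗ[k] Z →ₗ[k] Z)
    (r : W →ₗ[k] Z)
    -- deformation map condition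
    (hr : ∀ u v : W,
      r (mW u v) - m (r u) (r v)
        = pr u (r v) + pl (r u) v - r (tl u (r v) + tr (r u) v)) :
    -- W̃ is a subalgebra
    (∀ a ∈ LinearMap.range ((r.prod (LinearMap.id : W →ₗ[k] W))),
     ∀ b ∈ LinearMap.range ((r.prod (LinearMap.id : W →ₗ[k] W))),
      bMul m mW tr tl pl pr a b
        ∈ LinearMap.range ((r.prod (LinearMap.id : W →ₗ[k] W)))) ∧
    -- W̃ is a complement of Z ≅ Z × {0} in Z ⋈ W
    IsCompl (LinearMap.range (LinearMap.inl k Z W))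
      (LinearMap.range ((r.prod (LinearMap.id : W →ₗ[k] W)))) :=
  ⟨fun _ ha _ hb => IsDeformationMap.bMul_mem_range_prod_id hr ha hb,
    isCompl_range_inl_range_prod_id r⟩

/-- If `r : W → Z` is a deformation map of a matched pair of Zinbiel algebras,
then `W̃ = {(r(u), u) : u ∈ W}` is a Zinbiel subalgebra of `Z ⋈ W` and a
`Z`-complement of `Z ⋈ W`. -/
theorem stmt9 {k Z W : Type*} [Field k] [CharZero k]
    [AddCommGroup Z] [Module k Z] [AddCommGroup W] [Module k W]
    (m : Z →ₗ[k] Z →ₗ[k] Z)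
    (hZ : ∀ x y z : Z, m (m x y) z = m x (m y z + m z y))
    (mW : W →ₗ[k] W →ₗ[k] W)
    (hW : ∀ u v w : W, mW (mW u v) w = mW u (mW v w + mW w v))
    (tr : Z →ₗ[k] W →ₗ[k] W) (tl : W →ₗ[k] Z →ₗ[k] W)
    (pl : Z →ₗ[k] W →ₗ[k] Z) (pr : W →ₗ[k] Z →ₗ[k] Z)
    -- matched pair: the bicrossed product is a Zinbiel algebra
    (hmp : ∀ a b c : Z × W,
      bMul m mW tr tl pl pr (bMul m mW tr tl pl pr a b) c =
        bMul m mW tr tl pl pr a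
          (bMul m mW tr tl pl pr b c + bMul m mW tr tl pl pr c b))
    (r : W →ₗ[k] Z)
    -- deformation map condition
    (hr : ∀ u v : W,
      r (mW u v) - m (r u) (r v)
        = pr u (r v) + pl (r u) v - r (tl u (r v) + tr (r u) v)) :
    -- W̃ is a subalgebra
    (∀ a ∈ LinearMap.range ((r.prod (LinearMap.id : W →ₗ[k] W))),
     ∀ b ∈ LinearMap.range ((r.prod (LinearMap.id : W →ₗ[k] W))),
      bMul m mW tr tl pl pr a b
        ∈ LinearMap.range ((r.prod (LinearMap.id : W →ₗ[k] W)))) ∧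
    -- W̃ is a complement of Z ≅ Z × {0} in Z ⋈ W
    IsCompl (LinearMap.range (LinearMap.inl k Z W))
      (LinearMap.range ((r.prod (LinearMap.id : W →ₗ[k] W)))) :=
  stmt9_general m mW tr tl pl pr r hr
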